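/- arXiv:2307.00301 — 6 statements merged into one kernel-verified Lean document; each statement's English description precedes it below -/
import Mathlib

section
/- In a rooted tree, if vertex a is a strict ancestor of vertex b (lying on the path from the root to b but not equal to b's parent or to b), then a and b are not adjacent in the tree; and in any three permutations p₁,p₂,p₃ constituting a word representing the tree permutationally, a and b do not alternate in p₁p₂p₃ (there exist i ≠ j with a preceding b in p_i and b preceding a in p_j). -/
/-- Letters `a` and `b` alternate in the word `w` if the subword of `w` obtained by
keeping only the occurrences of `a` and `b` has no two equal consecutive letters. -/
def Alternates {V : Type*} [DecidableEq V] (w : List V) (a b : V) : Prop :=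
  (w.filter fun x => decide (x = a ∨ x = b)).Chain' (· ≠ ·)

/-- The word `w` represents the simple graph `G`: distinct vertices are adjacent
iff they alternate in `w`. -/
def Represents {V : Type*} [DecidableEq V] (w : List V) (G : SimpleGraph V) : Prop :=
  ∀ a b : V, a ≠ b → (G.Adj a b ↔ Alternates w a b)

/-- The list `p` is a permutation of the type `V`: it has no duplicates and
contains every element of `V`. -/
def IsPermList {V : Type*} (p : List V) : Prop :=
  p.Nodup ∧ ∀ x : V, x ∈ p

/-- `a` precedes `b` in the list `p`. -/
def Precedes {V : Type*} [DecidableEq V] (p : List V) (a b : V) : Prop :=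
  p.idxOf a < p.idxOf b

/-!
A path from the root to `a`, followed by the edge `ab`, would be a root-`b` path ending in `a`
unless it already passed through `b`; since `a` lies on every root-`b` path it does not. So the
edge `ab` would make `a` the parent of `b`. Being non-adjacent, `a` and `b` do not alternate in
`p₁p₂p₃`, and in a concatenation of permutations that means precisely that their relative order
is not the same in all three.
-/

namespace SimpleGraph

theorem Reachable.not_adj_of_mem_support_of_ne_penultimate {V : Type*} {G : SimpleGraph V}
    {r a b : V} (hrb : G.Reachable r b)
    (hanc : ∀ w : G.Walk r b, w.IsPath → a ∈ w.support)
    (hpar : ∀ w : G.Walk r b, w.IsPath → a ≠ w.penultimate) :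
    ¬ G.Adj a b := by
  classical
  intro hadj
  obtain ⟨w, hw⟩ := hrb.exists_isPath
  have ha := hanc w hw
  have hb : b ∉ (w.takeUntil a ha).support :=
    Walk.endpoint_notMem_support_takeUntil hw ha hadj.ne.symm
  exact hpar _ ((hw.takeUntil ha).concat hb hadj) (Walk.penultimate_concat _ _).symm

end SimpleGraph

section Order

variable {V : Type*} [DecidableEq V] {p : List V} {a b : V}

theorem Precedes.ne (h : Precedes p a b) : a ≠ b := by
  rintro rfl
  exact lt_irrefl _ h

theorem filter_eq_pair_or_eq_pair (hp : p.Nodup) (ha : a ∈ p) (hb : b ∈ p) (hab : a ≠ b) :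
    p.filter (fun x => decide (x = a ∨ x = b)) = [a, b] ∨
      p.filter (fun x => decide (x = a ∨ x = b)) = [b, a] := by
  refine List.perm_pair.mp ((List.perm_ext_iff_of_nodup (hp.filter _) ?_).mpr fun x => ?_)
  · simpa using hab
  · simp only [List.mem_filter, List.mem_cons, List.not_mem_nil, or_false, decide_eq_true_eq]
    constructor
    · exact And.right
    · rintro (rfl | rfl) <;> simp_all

theorem precedes_of_filter_eq_pair (hab : a ≠ b)
    (h : p.filter (fun x => decide (x = a ∨ x = b)) = [a, b]) : Precedes p a b := by
  induction p with
  | nil => simp at h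
  | cons x t ih =>
    by_cases hxa : x = a
    · subst hxa
      simp [Precedes, List.idxOf_cons_ne _ hab]
    · have hxb : x ≠ b := by
        rintro rfl
        simp at h
        exact hxa h.1
      have ht := ih (by simpa [List.filter_cons, hxa, hxb] using h)
      simpa [Precedes, List.idxOf_cons_ne _ hxa, List.idxOf_cons_ne _ hxb] using ht

theorem precedes_or_precedes_of_mem (ha : a ∈ p) (hab : a ≠ b) :
    Precedes p a b ∨ Precedes p b a :=
  lt_or_gt_of_ne (mt (List.idxOf_inj ha).mp hab)

theorem filter_eq_pair_of_precedes (hp : p.Nodup) (ha : a ∈ p) (hb : b ∈ p)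
    (h : Precedes p a b) : p.filter (fun x => decide (x = a ∨ x = b)) = [a, b] := by
  refine (filter_eq_pair_or_eq_pair hp ha hb h.ne).resolve_right fun h' => ?_
  refine lt_asymm h (precedes_of_filter_eq_pair h.ne.symm ?_)
  rw [← h']
  exact List.filter_congr fun x _ => by simp [or_comm]

theorem alternates_of_precedes {p₁ p₂ p₃ : List V}
    (hp₁ : IsPermList p₁) (hp₂ : IsPermList p₂) (hp₃ : IsPermList p₃)
    (h₁ : Precedes p₁ a b) (h₂ : Precedes p₂ a b) (h₃ : Precedes p₃ a b) :
    Alternates (p₁ ++ p₂ ++ p₃) a b := by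
  rw [Alternates, List.filter_append, List.filter_append,
    filter_eq_pair_of_precedes hp₁.1 (hp₁.2 a) (hp₁.2 b) h₁,
    filter_eq_pair_of_precedes hp₂.1 (hp₂.2 a) (hp₂.2 b) h₂,
    filter_eq_pair_of_precedes hp₃.1 (hp₃.2 a) (hp₃.2 b) h₃]
  show List.IsChain _ [a, b, a, b, a, b]
  simp [h₁.ne, h₁.ne.symm]

theorem exists_precedes_of_not_alternates {p₁ p₂ p₃ : List V}
    (hp₁ : IsPermList p₁) (hp₂ : IsPermList p₂) (hp₃ : IsPermList p₃) (hab : a ≠ b)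
    (h : ¬ Alternates (p₁ ++ p₂ ++ p₃) b a) :
    ∃ i : Fin 3, Precedes ([p₁, p₂, p₃].get i) a b := by
  by_contra! hne
  exact h (alternates_of_precedes hp₁ hp₂ hp₃
    ((precedes_or_precedes_of_mem (hp₁.2 a) hab).resolve_left (hne 0))
    ((precedes_or_precedes_of_mem (hp₂.2 a) hab).resolve_left (hne 1))
    ((precedes_or_precedes_of_mem (hp₃.2 a) hab).resolve_left (hne 2)))

end Order

/-- In a tree rooted at `r`, if `a` is a strict ancestor of `b` (it lies on every path
from `r` to `b`, is distinct from `b`, and is not the parent of `b`, i.e. not the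
penultimate vertex of the path), then `a` and `b` are not adjacent, and in any three
permutations `p₁ p₂ p₃` constituting a word representing the tree permutationally,
`a` and `b` do not alternate: for some `i ≠ j`, `a` precedes `b` in `pᵢ` and `b`
precedes `a` in `pⱼ`. -/
theorem strict_ancestor_not_alternating {V : Type*} [DecidableEq V]
    (T : SimpleGraph V) (hT : T.IsTree) (r a b : V)
    (p₁ p₂ p₃ : List V) (hp₁ : IsPermList p₁) (hp₂ : IsPermList p₂) (hp₃ : IsPermList p₃)
    (hrep : Represents (p₁ ++ p₂ ++ p₃) T)
    (hanc : ∀ w : T.Walk r b, w.IsPath → a ∈ w.support)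
    (hab : a ≠ b)
    (hpar : ∀ w : T.Walk r b, w.IsPath → a ≠ w.getVert (w.length - 1)) :
    ¬ T.Adj a b ∧
      ∃ i j : Fin 3, i ≠ j ∧ Precedes ([p₁, p₂, p₃].get i) a b ∧
        Precedes ([p₁, p₂, p₃].get j) b a := by
  have hnadj : ¬ T.Adj a b :=
    (hT.connected.preconnected r b).not_adj_of_mem_support_of_ne_penultimate hanc hpar
  refine ⟨hnadj, ?_⟩
  obtain ⟨i, hi⟩ := exists_precedes_of_not_alternates hp₁ hp₂ hp₃ hab
    fun h => hnadj ((hrep b a hab.symm).mpr h).symm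
  obtain ⟨j, hj⟩ := exists_precedes_of_not_alternates hp₁ hp₂ hp₃ hab.symm
    fun h => hnadj ((hrep a b hab).mpr h)
  exact ⟨i, j, by rintro rfl; exact lt_asymm hi hj, hi, hj⟩
end

section
/- Every tree admits a word that is a concatenation of three permutations of its vertex set representing it; that is, the permutation-representation number of any tree is at most 3. -/
/-- The permutation-representation number of `G`: the least `k ≥ 1` such that `G` is
represented by a concatenation of `k` permutations of its vertex set. -/
noncomputable def prn {V : Type*} [DecidableEq V] (G : SimpleGraph V) : ℕ :=
  sInf {k | 0 < k ∧ ∃ ps : List (List V), ps.length = k ∧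
    (∀ p ∈ ps, IsPermList p) ∧ Represents ps.flatten G}

theorem List.eq_of_mem_of_nodup_flatMap {ι α : Type*} {ts : List ι} {S : ι → List α}
    {s t : ι} {a : α} (h : (ts.flatMap S).Nodup) (hs : s ∈ ts) (ht : t ∈ ts) (has : a ∈ S s)
    (hat : a ∈ S t) : s = t := by
  by_contra hst
  have : Std.Symm (Function.onFun List.Disjoint S) := ⟨fun _ _ h => h.symm⟩
  exact (List.nodup_flatMap.1 h).2.forall hs ht hst has hat

theorem List.Perm.isPermList_iff {V : Type*} {l₁ l₂ : List V} (h : l₁.Perm l₂) :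
    IsPermList l₁ ↔ IsPermList l₂ := by
  simp only [IsPermList, h.nodup_iff, h.mem_iff]

theorem isPermList_iff_count_eq_one {V : Type*} [DecidableEq V] {l : List V} :
    IsPermList l ↔ ∀ v, l.count v = 1 :=
  ⟨fun h v => List.count_eq_one_of_mem h.1 (h.2 v), fun h =>
    ⟨List.nodup_iff_count_le_one.2 fun v => (h v).le,
      fun v => List.count_pos_iff.1 (by rw [h v]; exact one_pos)⟩⟩

section PairSubword
variable {V : Type*} [DecidableEq V] {l l₁ l₂ l₃ : List V} {a b x : V}

def pairSubword (w : List V) (a b : V) : List V :=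
  w.filter fun x => decide (x = a ∨ x = b)

theorem pairSubword_append (l₁ l₂ : List V) (a b : V) :
    pairSubword (l₁ ++ l₂) a b = pairSubword l₁ a b ++ pairSubword l₂ a b :=
  List.filter_append ..

theorem pairSubword_reverse (l : List V) (a b : V) :
    pairSubword l.reverse a b = (pairSubword l a b).reverse :=
  List.filter_reverse

theorem pairSubword_flatMap {ι : Type*} (ts : List ι) (f : ι → List V) (a b : V) :
    pairSubword (ts.flatMap f) a b = ts.flatMap fun s => pairSubword (f s) a b :=
  List.filter_flatMap

theorem pairSubword_comm (l : List V) (a b : V) : pairSubword l a b = pairSubword l b a := by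
  simp only [pairSubword, or_comm]

theorem pairSubword_cons_left (l : List V) (a b : V) :
    pairSubword (a :: l) a b = a :: pairSubword l a b := by
  simp [pairSubword]

theorem pairSubword_cons_of_ne (hxa : x ≠ a) (hxb : x ≠ b) :
    pairSubword (x :: l) a b = pairSubword l a b := by
  simp [pairSubword, hxa, hxb]

theorem pairSubword_of_not_mem_right (hb : b ∉ l) :
    pairSubword l a b = List.replicate (l.count a) a := by
  rw [← List.filter_eq]
  refine List.filter_congr fun y hy => ?_
  simp only [decide_eq_decide, or_iff_left_iff_imp]
  rintro rfl
  exact absurd hy hb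

theorem pairSubword_eq_nil (ha : a ∉ l) (hb : b ∉ l) : pairSubword l a b = [] := by
  rw [pairSubword_of_not_mem_right hb, List.count_eq_zero.2 ha, List.replicate_zero]

theorem pairSubword_eq_singleton_left (hl : l.Nodup) (ha : a ∈ l) (hb : b ∉ l) :
    pairSubword l a b = [a] := by
  rw [pairSubword_of_not_mem_right hb, List.count_eq_one_of_mem hl ha, List.replicate_one]

theorem pairSubword_eq_singleton_right (hl : l.Nodup) (ha : a ∉ l) (hb : b ∈ l) :
    pairSubword l a b = [b] := by
  rw [pairSubword_comm, pairSubword_eq_singleton_left hl hb ha]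

theorem pairSubword_eq_of_perm (h : l₁.Perm l₂) (hab : a ∉ l₂ ∨ b ∉ l₂) :
    pairSubword l₁ a b = pairSubword l₂ a b := by
  rcases hab with ha | hb
  · rw [pairSubword_comm l₁, pairSubword_comm l₂, pairSubword_of_not_mem_right ha,
      pairSubword_of_not_mem_right (mt h.mem_iff.1 ha), h.count_eq]
  · rw [pairSubword_of_not_mem_right hb, pairSubword_of_not_mem_right (mt h.mem_iff.1 hb),
      h.count_eq]

theorem pairSubword_eq_or (hl : l.Nodup) (ha : a ∈ l) (hb : b ∈ l) (hab : a ≠ b) :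
    pairSubword l a b = [a, b] ∨ pairSubword l a b = [b, a] := by
  induction l with
  | nil => simp at ha
  | cons y l ih =>
    obtain ⟨hy, hl'⟩ := List.nodup_cons.1 hl
    rcases List.mem_cons.1 ha with rfl | ha' <;> rcases List.mem_cons.1 hb with rfl | hb'
    · exact absurd rfl hab
    · left; rw [pairSubword_cons_left, pairSubword_eq_singleton_right hl' hy hb']
    · right; rw [pairSubword_comm, pairSubword_cons_left, pairSubword_comm,
        pairSubword_eq_singleton_left hl' ha' hy]
    · rw [pairSubword_cons_of_ne (by rintro rfl; exact hy ha') (by rintro rfl; exact hy hb')]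
      exact ih hl' ha' hb'

variable {ι : Type*} {ts : List ι} {S f : ι → List V} {t : ι}

theorem pairSubword_flatMap_of_mem (hS : (ts.flatMap S).Nodup) (hf : ∀ s ∈ ts, f s ⊆ S s)
    (ht : t ∈ ts) (ha : a ∈ S t) (hb : b ∈ S t) :
    pairSubword (ts.flatMap f) a b = pairSubword (f t) a b := by
  induction ts with
  | nil => simp at ht
  | cons s ts ih =>
    rw [List.flatMap_cons, List.nodup_append] at hS
    obtain ⟨-, hS, hdisj⟩ := hS
    have hf' : ∀ s ∈ ts, f s ⊆ S s := fun s hs => hf s (List.mem_cons_of_mem _ hs)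
    rw [List.flatMap_cons, pairSubword_append]
    rcases List.mem_cons.1 ht with rfl | ht
    · have hout : ∀ {y}, y ∈ S t → y ∉ ts.flatMap f := fun hy hy' => by
        obtain ⟨s, hs, hys⟩ := List.mem_flatMap.1 hy'
        exact hdisj _ hy _ (List.mem_flatMap.2 ⟨s, hs, hf' s hs hys⟩) rfl
      rw [pairSubword_eq_nil (hout ha) (hout hb), List.append_nil]
    · have hout : ∀ {y}, y ∈ S t → y ∉ f s := fun hy hy' =>
        hdisj _ (hf s List.mem_cons_self hy') _ (List.mem_flatMap.2 ⟨t, ht, hy⟩) rfl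
      rw [pairSubword_eq_nil (hout ha) (hout hb), List.nil_append, ih hS hf' ht]

theorem pairSubword_flatMap_eq_of_perm (hf : ∀ s ∈ ts, (f s).Perm (S s))
    (hab : ∀ s ∈ ts, a ∉ S s ∨ b ∉ S s) :
    pairSubword (ts.flatMap f) a b = pairSubword (ts.flatMap S) a b := by
  simp only [pairSubword_flatMap]
  exact List.flatMap_congr fun s hs => pairSubword_eq_of_perm (hf s hs) (hab s hs)

end PairSubword

section SameOrder
variable {V : Type*} [DecidableEq V] {l₁ l₂ l₃ : List V} {a b : V}

def SameOrder (l₁ l₂ l₃ : List V) (a b : V) : Prop :=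
  pairSubword l₁ a b = pairSubword l₂ a b ∧ pairSubword l₂ a b = pairSubword l₃ a b

theorem sameOrder_comm : SameOrder l₁ l₂ l₃ a b ↔ SameOrder l₁ l₂ l₃ b a := by
  simp only [SameOrder, pairSubword_comm _ a b]

theorem sameOrder_reverse_iff :
    SameOrder l₁.reverse l₃.reverse l₂.reverse a b ↔ SameOrder l₁ l₂ l₃ a b := by
  simp only [SameOrder, pairSubword_reverse, List.reverse_inj]
  constructor <;> rintro ⟨h, h'⟩ <;> exact ⟨h.trans h', h'.symm⟩

theorem alternates_append_iff_sameOrder (hab : a ≠ b)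
    (h₁ : IsPermList l₁) (h₂ : IsPermList l₂) (h₃ : IsPermList l₃) :
    Alternates (l₁ ++ l₂ ++ l₃) a b ↔ SameOrder l₁ l₂ l₃ a b := by
  change (pairSubword (l₁ ++ l₂ ++ l₃) a b).IsChain (· ≠ ·) ↔ _
  rw [pairSubword_append, pairSubword_append]
  rcases pairSubword_eq_or h₁.1 (h₁.2 a) (h₁.2 b) hab with e₁ | e₁ <;>
    rcases pairSubword_eq_or h₂.1 (h₂.2 a) (h₂.2 b) hab with e₂ | e₂ <;>
    rcases pairSubword_eq_or h₃.1 (h₃.2 a) (h₃.2 b) hab with e₃ | e₃ <;>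
    simp [SameOrder, e₁, e₂, e₃, hab, hab.symm]

end SameOrder

structure RoseTree (V : Type*) where
  root : V
  children : List (RoseTree V)

namespace RoseTree
variable {V W : Type*}

@[induction_eliminator]
theorem induction {P : RoseTree V → Prop}
    (node : ∀ r ts, (∀ t ∈ ts, P t) → P ⟨r, ts⟩) : ∀ t, P t
  | ⟨r, ts⟩ => node r ts fun t _ => induction node t

def verts : RoseTree V → List V
  | ⟨r, ts⟩ => r :: ts.flatMap verts

def edges : RoseTree V → List (Sym2 V)
  | ⟨r, ts⟩ => ts.map (fun t => s(r, t.root)) ++ ts.flatMap edges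

def ord1 : RoseTree V → List V
  | ⟨r, ts⟩ => r :: ts.flatMap fun t => (ord1 t).reverse

def ord2 : RoseTree V → List V
  | ⟨r, ts⟩ => ts.flatMap (fun t => t.children.flatMap ord2) ++ r :: ts.map root
decreasing_by
  rename_i ht g hg
  have := List.sizeOf_lt_of_mem ht
  have := List.sizeOf_lt_of_mem hg
  cases t
  simp_all
  omega

def ord3 : RoseTree V → List V
  | ⟨r, ts⟩ => r :: (ts.flatMap ord2).reverse

theorem root_mem_verts (t : RoseTree V) : t.root ∈ t.verts := by
  cases t; simp [verts]

theorem mem_verts_of_mem_edges {t : RoseTree V} {e : Sym2 V} {v : V} (he : e ∈ t.edges)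
    (hv : v ∈ e) : v ∈ t.verts := by
  induction t with
  | node r ts ih =>
    simp only [edges, List.mem_append, List.mem_map, List.mem_flatMap] at he
    simp only [verts, List.mem_cons, List.mem_flatMap]
    rcases he with ⟨t, ht, rfl⟩ | ⟨t, ht, he⟩
    · rcases Sym2.mem_iff.1 hv with rfl | rfl
      exacts [Or.inl rfl, Or.inr ⟨t, ht, root_mem_verts t⟩]
    · exact Or.inr ⟨t, ht, ih t ht he⟩

theorem reverse_ord3 (t : RoseTree V) :
    (ord3 t).reverse = t.children.flatMap ord2 ++ [t.root] := by
  cases t; simp [ord3]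

theorem ord1_perm (t : RoseTree V) : (ord1 t).Perm t.verts := by
  induction t with
  | node r ts ih =>
    rw [ord1, verts]
    exact (List.Perm.flatMap_left ts fun t ht => (List.reverse_perm _).trans (ih t ht)).cons r

theorem ord2_perm_and_ord3_perm (t : RoseTree V) :
    (ord2 t).Perm t.verts ∧ (ord3 t).Perm t.verts := by
  induction t with
  | node r ts ih =>
    constructor
    · have hblocks : ((ts.flatMap fun t => t.children.flatMap ord2) ++ ts.map root).Perm
          (ts.flatMap verts) := by
        rw [List.map_eq_flatMap]
        refine (List.flatMap_append_perm ..).trans (List.Perm.flatMap_left ts fun t ht => ?_)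
        rw [← reverse_ord3]
        exact (List.reverse_perm _).trans (ih t ht).2
      rw [ord2, verts]
      exact List.perm_middle.trans (hblocks.cons r)
    · rw [ord3, verts]
      exact ((List.reverse_perm _).trans
        (List.Perm.flatMap_left ts fun t ht => (ih t ht).1)).cons r

variable {r a b : V} {ts : List (RoseTree V)}

theorem ord2_perm (t : RoseTree V) : (ord2 t).Perm t.verts := (ord2_perm_and_ord3_perm t).1

theorem ord3_perm (t : RoseTree V) : (ord3 t).Perm t.verts := (ord2_perm_and_ord3_perm t).2

theorem mem_edges_node_root_iff (hr : r ∉ ts.flatMap verts) :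
    s(r, b) ∈ edges ⟨r, ts⟩ ↔ b ∈ ts.map root := by
  simp only [edges, List.mem_append, List.mem_map, List.mem_flatMap, Sym2.congr_right]
  refine or_iff_left fun ⟨t, ht, he⟩ => hr ?_
  exact List.mem_flatMap.2 ⟨t, ht, mem_verts_of_mem_edges he (Sym2.mem_mk_left r b)⟩

theorem mem_edges_node_iff_exists (hr : r ∉ ts.flatMap verts) (ha : a ∈ ts.flatMap verts)
    (hb : b ∈ ts.flatMap verts) :
    s(a, b) ∈ edges ⟨r, ts⟩ ↔ ∃ t ∈ ts, s(a, b) ∈ t.edges := by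
  simp only [edges, List.mem_append, List.mem_map, List.mem_flatMap]
  refine or_iff_right fun ⟨t, ht, he⟩ => hr ?_
  rcases Sym2.eq_iff.1 he with ⟨rfl, rfl⟩ | ⟨rfl, rfl⟩
  · exact ha
  · exact hb

section SameOrder
variable [DecidableEq V] {t : RoseTree V}

theorem sameOrder_node_root_iff (hn : (verts ⟨r, ts⟩).Nodup) (hb : b ∈ ts.flatMap verts) :
    SameOrder (ord1 ⟨r, ts⟩) (ord2 ⟨r, ts⟩) (ord3 ⟨r, ts⟩) r b ↔ b ∈ ts.map root := by
  rw [verts, List.nodup_cons] at hn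
  obtain ⟨hr, hF⟩ := hn
  have hrb : r ≠ b := fun h => hr (h ▸ hb)
  have h1 := ord1_perm ⟨r, ts⟩
  have h2 := ord2_perm ⟨r, ts⟩
  have h3 := ord3_perm ⟨r, ts⟩
  rw [ord1, verts, List.perm_cons] at h1
  rw [ord2, verts] at h2
  replace h2 := (List.perm_cons r).1 (List.perm_middle.symm.trans h2)
  rw [ord3, verts, List.perm_cons] at h3
  have e1 : pairSubword (ord1 ⟨r, ts⟩) r b = [r, b] := by
    rw [ord1, pairSubword_cons_left, pairSubword_eq_singleton_right (h1.nodup_iff.2 hF)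
      (mt h1.mem_iff.1 hr) (h1.mem_iff.2 hb)]
  have e3 : pairSubword (ord3 ⟨r, ts⟩) r b = [r, b] := by
    rw [ord3, pairSubword_cons_left, pairSubword_eq_singleton_right (h3.nodup_iff.2 hF)
      (mt h3.mem_iff.1 hr) (h3.mem_iff.2 hb)]
  have hsplit := h2.nodup_iff.2 hF
  rw [List.nodup_append] at hsplit
  obtain ⟨hA, hB, hdisj⟩ := hsplit
  have hrA := fun h => hr (h2.mem_iff.1 (List.mem_append_left _ h))
  have hrB := fun h => hr (h2.mem_iff.1 (List.mem_append_right _ h))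
  rw [SameOrder, e1, e3, ord2, pairSubword_append, pairSubword_cons_left]
  by_cases hbB : b ∈ ts.map root
  · rw [pairSubword_eq_nil hrA fun h => hdisj _ h _ hbB rfl,
      pairSubword_eq_singleton_right hB hrB hbB]
    simp [hbB]
  · have hbA := (List.mem_append.1 (h2.mem_iff.2 hb)).resolve_right hbB
    rw [pairSubword_eq_singleton_right hA hrA hbA, pairSubword_eq_nil hrB hbB]
    simp [hbB, hrb]

theorem sameOrder_node_iff_of_mem (hn : (verts ⟨r, ts⟩).Nodup) (ht : t ∈ ts)
    (ha : a ∈ t.verts) (hb : b ∈ t.verts) :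
    SameOrder (ord1 ⟨r, ts⟩) (ord2 ⟨r, ts⟩) (ord3 ⟨r, ts⟩) a b ↔
      SameOrder (ord1 t) (ord2 t) (ord3 t) a b := by
  rw [verts, List.nodup_cons] at hn
  obtain ⟨hr, hF⟩ := hn
  have hra : r ≠ a := fun h => hr (List.mem_flatMap.2 ⟨t, ht, h ▸ ha⟩)
  have hrb : r ≠ b := fun h => hr (List.mem_flatMap.2 ⟨t, ht, h ▸ hb⟩)
  have e1 : pairSubword (ord1 ⟨r, ts⟩) a b = pairSubword (ord1 t).reverse a b := by
    rw [ord1, pairSubword_cons_of_ne hra hrb, pairSubword_flatMap_of_mem hF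
      (fun s _ => ((List.reverse_perm _).trans (ord1_perm s)).subset) ht ha hb]
  have e2 : pairSubword (ord2 ⟨r, ts⟩) a b = pairSubword (ord3 t).reverse a b := by
    have hsub : ∀ s ∈ ts, s.children.flatMap ord2 ++ [s.root] ⊆ s.verts := fun s _ x hx =>
      (ord3_perm s).subset (List.mem_reverse.1 (by rwa [reverse_ord3]))
    rw [ord2, pairSubword_append, pairSubword_cons_of_ne hra hrb, List.map_eq_flatMap,
      pairSubword_flatMap_of_mem hF (fun s hs y hy => hsub s hs (List.mem_append_left _ hy))
        ht ha hb,
      pairSubword_flatMap_of_mem hF (fun s hs y hy => hsub s hs (List.mem_append_right _ hy))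
        ht ha hb,
      ← pairSubword_append, ← reverse_ord3]
  have e3 : pairSubword (ord3 ⟨r, ts⟩) a b = pairSubword (ord2 t).reverse a b := by
    rw [ord3, pairSubword_cons_of_ne hra hrb, pairSubword_reverse, pairSubword_reverse,
      pairSubword_flatMap_of_mem hF (fun s _ => (ord2_perm s).subset) ht ha hb]
  rw [SameOrder, e1, e2, e3, ← SameOrder, sameOrder_reverse_iff]

theorem not_sameOrder_node (hn : (verts ⟨r, ts⟩).Nodup) (ha : a ∈ ts.flatMap verts)
    (hb : b ∈ ts.flatMap verts) (hab : a ≠ b)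
    (hsplit : ∀ t ∈ ts, a ∉ t.verts ∨ b ∉ t.verts) :
    ¬SameOrder (ord1 ⟨r, ts⟩) (ord2 ⟨r, ts⟩) (ord3 ⟨r, ts⟩) a b := by
  rw [verts, List.nodup_cons] at hn
  obtain ⟨hr, hF⟩ := hn
  have hra : r ≠ a := fun h => hr (h ▸ ha)
  have hrb : r ≠ b := fun h => hr (h ▸ hb)
  have e1 : pairSubword (ord1 ⟨r, ts⟩) a b = pairSubword (ts.flatMap verts) a b := by
    rw [ord1, pairSubword_cons_of_ne hra hrb, pairSubword_flatMap_eq_of_perm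
      (fun s _ => (List.reverse_perm _).trans (ord1_perm s)) hsplit]
  have e3 : pairSubword (ord3 ⟨r, ts⟩) a b = (pairSubword (ts.flatMap verts) a b).reverse := by
    rw [ord3, pairSubword_cons_of_ne hra hrb, pairSubword_reverse,
      pairSubword_flatMap_eq_of_perm (fun s _ => ord2_perm s) hsplit]
  rintro ⟨h12, h23⟩
  have h13 := h12.trans h23
  rw [e1, e3] at h13
  rcases pairSubword_eq_or hF ha hb hab with h | h <;> rw [h] at h13 <;> simp [hab] at h13

theorem mem_edges_iff_sameOrder (hn : t.verts.Nodup) (ha : a ∈ t.verts) (hb : b ∈ t.verts)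
    (hab : a ≠ b) : s(a, b) ∈ t.edges ↔ SameOrder (ord1 t) (ord2 t) (ord3 t) a b := by
  induction t generalizing a b with
  | node r ts ih =>
    have hn' := hn
    rw [verts, List.nodup_cons] at hn'
    obtain ⟨hr, hF⟩ := hn'
    rw [verts, List.mem_cons] at ha hb
    rcases ha with rfl | ha <;> rcases hb with rfl | hb
    · exact absurd rfl hab
    · rw [mem_edges_node_root_iff hr, sameOrder_node_root_iff hn hb]
    · rw [Sym2.eq_swap, sameOrder_comm, mem_edges_node_root_iff hr,
        sameOrder_node_root_iff hn ha]
    · rw [mem_edges_node_iff_exists hr ha hb]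
      by_cases hsplit : ∀ t ∈ ts, a ∉ t.verts ∨ b ∉ t.verts
      · refine iff_of_false ?_ (not_sameOrder_node hn ha hb hab hsplit)
        rintro ⟨t, ht, he⟩
        exact (hsplit t ht).elim (· (mem_verts_of_mem_edges he (Sym2.mem_mk_left a b)))
          (· (mem_verts_of_mem_edges he (Sym2.mem_mk_right a b)))
      push Not at hsplit
      obtain ⟨t, ht, hat, hbt⟩ := hsplit
      rw [sameOrder_node_iff_of_mem hn ht hat hbt,
        ← ih t ht ((List.nodup_flatMap.1 hF).1 t ht) hat hbt hab]
      refine ⟨fun ⟨s, hs, he⟩ => ?_, fun he => ⟨t, ht, he⟩⟩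
      obtain rfl := List.eq_of_mem_of_nodup_flatMap hF hs ht
        (mem_verts_of_mem_edges he (Sym2.mem_mk_left a b)) hat
      exact he

end SameOrder

def map (f : V → W) : RoseTree V → RoseTree W
  | ⟨r, ts⟩ => ⟨f r, ts.map (map f)⟩

theorem verts_map (f : V → W) (t : RoseTree V) : (t.map f).verts = t.verts.map f := by
  induction t with
  | node r ts ih =>
    simp only [map, verts, List.map_cons, List.flatMap_map, List.map_flatMap]
    exact congrArg _ (List.flatMap_congr ih)

theorem root_map (f : V → W) (t : RoseTree V) : (t.map f).root = f t.root := by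
  cases t; simp [map]

theorem edges_map (f : V → W) (t : RoseTree V) : (t.map f).edges = t.edges.map (Sym2.map f) := by
  induction t with
  | node r ts ih =>
    simp only [map, edges, List.map_append, List.map_map, List.flatMap_map, List.map_flatMap]
    congr 1
    · simp [Function.comp_def, root_map]
    · exact List.flatMap_congr ih

def IsRootingOf (t : RoseTree V) (G : SimpleGraph V) : Prop :=
  IsPermList t.verts ∧ ∀ a b, a ≠ b → (G.Adj a b ↔ s(a, b) ∈ t.edges)

section AddLeaf
variable [DecidableEq V] {u x : V}

def addLeaf (u x : V) : RoseTree V → RoseTree V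
  | ⟨r, ts⟩ => ⟨r, (if r = u then [⟨x, []⟩] else []) ++ ts.map (addLeaf u x)⟩

theorem root_addLeaf (t : RoseTree V) : (addLeaf u x t).root = t.root := by
  cases t; simp [addLeaf]

theorem count_verts_addLeaf (t : RoseTree V) (v : V) :
    (addLeaf u x t).verts.count v = t.verts.count v + if v = x then t.verts.count u else 0 := by
  induction t with
  | node r ts ih =>
    have hsum : (ts.map fun t => (addLeaf u x t).verts.count v).sum =
        (ts.map fun t => t.verts.count v).sum +
          if v = x then (ts.map fun t => t.verts.count u).sum else 0 := by
      rw [List.map_congr_left ih, List.sum_map_add]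
      split_ifs <;> simp
    simp only [addLeaf, verts, List.flatMap_append, List.count_cons, List.count_append,
      List.count_flatMap, List.flatMap_map, Function.comp_def, hsum]
    by_cases hr : r = u <;> by_cases hv : v = x <;>
      simp [hr, hv, verts, List.count_singleton] <;> grind

theorem mem_edges_addLeaf (t : RoseTree V) (e : Sym2 V) :
    e ∈ (addLeaf u x t).edges ↔ (u ∈ t.verts ∧ e = s(u, x)) ∨ e ∈ t.edges := by
  induction t with
  | node r ts ih =>
    simp only [addLeaf, edges, verts, List.map_append, List.flatMap_append, List.mem_append,
      List.map_map, Function.comp_def, root_addLeaf, List.mem_flatMap, List.mem_map,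
      List.mem_cons]
    split_ifs with hr
    · subst hr; simp [edges]; grind
    · grind

theorem count_verts_map_val {t : RoseTree ({x}ᶜ : Set V)} (ht : IsPermList t.verts) (v : V) :
    (t.map Subtype.val).verts.count v = if v = x then 0 else 1 := by
  rw [verts_map]
  split_ifs with hv
  · subst hv
    exact List.count_eq_zero.2 (by simp)
  · rw [show v = ((⟨v, Set.mem_compl_singleton_iff.2 hv⟩ : ({x}ᶜ : Set V)) : V) from rfl,
      List.count_map_of_injective _ _ Subtype.val_injective]
    convert isPermList_iff_count_eq_one.1 ht _

theorem IsRootingOf.addLeaf_map {G : SimpleGraph V} {t : RoseTree ({x}ᶜ : Set V)}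
    (ht : t.IsRootingOf (G.induce {x}ᶜ)) (hx : ∀ w, G.Adj x w ↔ w = u) :
    (addLeaf u x (t.map Subtype.val)).IsRootingOf G := by
  have hux : u ≠ x := ((hx u).2 rfl).ne'
  have hcount := count_verts_map_val ht.1
  have hu : u ∈ (t.map Subtype.val).verts := List.count_pos_iff.1 (by simp [hcount, hux])
  refine ⟨isPermList_iff_count_eq_one.2 fun v => ?_, fun a b hab => ?_⟩
  · rw [count_verts_addLeaf, hcount, hcount, if_neg hux]
    split_ifs <;> rfl
  have hx_not_mem : ∀ c, s(x, c) ∉ t.edges.map (Sym2.map Subtype.val) := by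
    intro c hc
    obtain ⟨e, -, he⟩ := List.mem_map.1 hc
    obtain ⟨y, -, hy⟩ := Sym2.mem_map.1 (he ▸ Sym2.mem_mk_left x c)
    exact y.2 hy
  have hx_adj : ∀ c, G.Adj x c ↔
      (u ∈ (t.map Subtype.val).verts ∧ s(x, c) = s(u, x)) ∨
        s(x, c) ∈ t.edges.map (Sym2.map Subtype.val) := by
    intro c
    rw [hx, or_iff_left (hx_not_mem c), and_iff_right hu, Sym2.eq_swap, Sym2.congr_left]
  rw [mem_edges_addLeaf, edges_map]
  by_cases ha : a = x
  · subst ha; exact hx_adj b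
  by_cases hb : b = x
  · subst hb; rw [G.adj_comm, Sym2.eq_swap]; exact hx_adj a
  have hne : s(a, b) ≠ s(u, x) := fun h => by
    rcases Sym2.mem_iff.1 (h ▸ Sym2.mem_mk_right u x : x ∈ s(a, b)) with h | h
    exacts [ha h.symm, hb h.symm]
  rw [or_iff_right fun h => hne h.2,
    show s(a, b) = Sym2.map Subtype.val s((⟨a, ha⟩ : ({x}ᶜ : Set V)), ⟨b, hb⟩) from rfl,
    List.mem_map_of_injective (Sym2.map.injective Subtype.val_injective),
    ← ht.2 _ _ fun h => hab (congrArg Subtype.val h)]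
  rfl

end AddLeaf

end RoseTree

theorem SimpleGraph.IsTree.exists_isRootingOf {V : Type*} [Fintype V] [DecidableEq V]
    {T : SimpleGraph V} (hT : T.IsTree) : ∃ t : RoseTree V, t.IsRootingOf T := by
  obtain ⟨n, hn⟩ : ∃ n, Fintype.card V = n := ⟨_, rfl⟩
  induction n generalizing V with
  | zero =>
    have := hT.1.nonempty
    exact absurd hn Fintype.card_ne_zero
  | succ n ih =>
    rcases subsingleton_or_nontrivial V with hV | hV
    · obtain ⟨v⟩ := hT.1.nonempty
      refine ⟨⟨v, []⟩, ⟨by simp [RoseTree.verts], fun w => ?_⟩, fun a b hab => ?_⟩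
      · simp [RoseTree.verts, Subsingleton.elim w v]
      · exact absurd (Subsingleton.elim a b) hab
    classical
    obtain ⟨x, hx⟩ := hT.exists_vert_degree_one_of_nontrivial
    obtain ⟨u, hxu, huniq⟩ := SimpleGraph.degree_eq_one_iff_existsUnique_adj.1 hx
    have hT' : (T.induce {x}ᶜ).IsTree :=
      ⟨hT.1.induce_compl_singleton_of_degree_eq_one hx, hT.2.induce _⟩
    have hcard : Fintype.card ({x}ᶜ : Set V) = n := by
      rw [Fintype.card_compl_set, Set.card_singleton, hn]
      rfl
    obtain ⟨t, ht⟩ := ih hT' hcard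
    exact ⟨_, ht.addLeaf_map fun w => ⟨huniq w, fun h => h ▸ hxu⟩⟩

theorem prn_le_length_of_represents {V : Type*} [DecidableEq V] {G : SimpleGraph V}
    {ps : List (List V)} (hne : ps ≠ []) (hps : ∀ p ∈ ps, IsPermList p)
    (h : Represents ps.flatten G) : prn G ≤ ps.length :=
  Nat.sInf_le ⟨List.length_pos_of_ne_nil hne, ps, rfl, hps, h⟩

open RoseTree in
/-- Every tree is represented by a concatenation of three permutations of its vertex
set; in particular, the permutation-representation number of a tree is at most 3. -/
theorem tree_prn_le_three {V : Type*} [DecidableEq V] [Fintype V]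
    (T : SimpleGraph V) (hT : T.IsTree) :
    (∃ p₁ p₂ p₃ : List V, IsPermList p₁ ∧ IsPermList p₂ ∧ IsPermList p₃ ∧
      Represents (p₁ ++ p₂ ++ p₃) T) ∧ prn T ≤ 3 := by
  obtain ⟨t, hverts, hadj⟩ := hT.exists_isRootingOf
  have h₁ : IsPermList (ord1 t) := (ord1_perm t).isPermList_iff.2 hverts
  have h₂ : IsPermList (ord2 t) := (ord2_perm t).isPermList_iff.2 hverts
  have h₃ : IsPermList (ord3 t) := (ord3_perm t).isPermList_iff.2 hverts
  have hrep : Represents (ord1 t ++ ord2 t ++ ord3 t) T := fun a b hab => by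
    rw [hadj a b hab, mem_edges_iff_sameOrder hverts.1 (hverts.2 a) (hverts.2 b) hab,
      alternates_append_iff_sameOrder hab h₁ h₂ h₃]
  refine ⟨⟨_, _, _, h₁, h₂, h₃, hrep⟩, ?_⟩
  simpa using prn_le_length_of_represents (ps := [ord1 t, ord2 t, ord3 t]) (by simp)
    (by simp [h₁, h₂, h₃]) (by simpa using hrep)
end

section
/- For n ≥ 3, the path graph P_n has permutation-representation number exactly 2. -/
/-! In a single permutation any two letters alternate, so a graph with a non-edge needs at
least two permutations. In a concatenation of two permutations, two letters alternate iff they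
occur in the same order in both; so it suffices to exhibit two orderings of the path that agree
exactly on the pairs of adjacent vertices. -/

section Words

variable {V : Type*} [DecidableEq V]

theorem alternates_iff_isChain {w : List V} {a b : V} :
    Alternates w a b ↔ (w.filter fun x => decide (x = a ∨ x = b)).IsChain (· ≠ ·) :=
  Iff.rfl

theorem filter_eq_pair_or_of_pairwise {l : List V} {R : V → V → Prop} (hl : l.Nodup)
    (hR : l.Pairwise R) {a b : V} (ha : a ∈ l) (hb : b ∈ l) (hab : a ≠ b) :
    (l.filter (fun x => decide (x = a ∨ x = b)) = [a, b] ∧ R a b) ∨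
      (l.filter (fun x => decide (x = a ∨ x = b)) = [b, a] ∧ R b a) := by
  have hperm : (l.filter fun x => decide (x = a ∨ x = b)).Perm [a, b] :=
    (List.perm_ext_iff_of_nodup (hl.filter _) (by simp [hab])).2 fun x => by aesop
  have hsorted := hR.filter (fun x => decide (x = a ∨ x = b))
  rcases List.perm_pair.1 hperm with h | h <;> rw [h] at hsorted ⊢ <;> simp_all

theorem alternates_of_isPermList {p : List V} (hp : IsPermList p) {a b : V} (hab : a ≠ b) :
    Alternates p a b := by
  rcases filter_eq_pair_or_of_pairwise (R := fun _ _ => True) hp.1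
      (List.pairwise_of_forall fun _ _ => trivial) (hp.2 a) (hp.2 b) hab with ⟨h, -⟩ | ⟨h, -⟩ <;>
    rw [alternates_iff_isChain, h] <;> simp [hab, hab.symm]

theorem alternates_append_iff {α : Type*} [Preorder α] {p q : List V} {f g : V → α}
    (hp : IsPermList p) (hq : IsPermList q) (hpf : p.Pairwise (f · < f ·))
    (hqg : q.Pairwise (g · < g ·)) {a b : V} (hab : a ≠ b) :
    Alternates (p ++ q) a b ↔ (f a < f b ↔ g a < g b) := by
  rcases filter_eq_pair_or_of_pairwise hp.1 hpf (hp.2 a) (hp.2 b) hab with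
    ⟨hp', hf⟩ | ⟨hp', hf⟩ <;>
  rcases filter_eq_pair_or_of_pairwise hq.1 hqg (hq.2 a) (hq.2 b) hab with
    ⟨hq', hg⟩ | ⟨hq', hg⟩ <;>
  rw [alternates_iff_isChain, List.filter_append, hp', hq'] <;>
  simp [hab, hab.symm, hf, hg, hf.asymm, hg.asymm]

end Words

section SortByRank

variable {V α : Type*} [Fintype V] [LinearOrder α]

noncomputable def sortByRank (f : V → α) : List V :=
  Finset.univ.toList.mergeSort fun a b => f a ≤ f b

theorem isPermList_sortByRank (f : V → α) : IsPermList (sortByRank f) :=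
  ⟨(List.mergeSort_perm _ _).nodup_iff.2 (Finset.nodup_toList _), fun x => by simp [sortByRank]⟩

theorem pairwise_sortByRank {f : V → α} (hf : Function.Injective f) :
    (sortByRank f).Pairwise (f · < f ·) := by
  have hle : (sortByRank f).Pairwise (f · ≤ f ·) := by
    simpa [sortByRank] using List.pairwise_mergeSort (le := fun a b => f a ≤ f b)
      (fun _ _ _ hab hbc => by simpa using (of_decide_eq_true hab).trans (of_decide_eq_true hbc))
      (fun a b => by simpa using le_total (f a) (f b)) Finset.univ.toList
  exact (hle.and (isPermList_sortByRank f).1).imp fun h => h.1.lt_of_ne (hf.ne h.2)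

end SortByRank

section PermRepresentable

variable {V : Type*} [DecidableEq V]

def PermRepresentable (G : SimpleGraph V) (k : ℕ) : Prop :=
  ∃ ps : List (List V), ps.length = k ∧ (∀ p ∈ ps, IsPermList p) ∧ Represents ps.flatten G

theorem adj_of_permRepresentable_one {G : SimpleGraph V} (hG : PermRepresentable G 1)
    {a b : V} (hab : a ≠ b) : G.Adj a b := by
  obtain ⟨ps, hlen, hps, hrep⟩ := hG
  obtain ⟨p, rfl⟩ := List.length_eq_one_iff.1 hlen
  exact (hrep a b hab).2 (by simpa using alternates_of_isPermList (hps p (by simp)) hab)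

theorem permRepresentable_two_of_ranks [Fintype V] {α : Type*} [LinearOrder α]
    {G : SimpleGraph V} {f g : V → α} (hf : Function.Injective f) (hg : Function.Injective g)
    (hG : ∀ a b, a ≠ b → (G.Adj a b ↔ (f a < f b ↔ g a < g b))) : PermRepresentable G 2 := by
  refine ⟨[sortByRank f, sortByRank g], rfl, ?_, fun a b hab => ?_⟩
  · simp [isPermList_sortByRank]
  · simpa [hG a b hab] using (alternates_append_iff (isPermList_sortByRank f)
      (isPermList_sortByRank g) (pairwise_sortByRank hf) (pairwise_sortByRank hg) hab).symm

theorem prn_eq_two {G : SimpleGraph V} (hG : PermRepresentable G 2) {a b : V} (hab : a ≠ b)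
    (hnadj : ¬G.Adj a b) : prn G = 2 := by
  refine le_antisymm (Nat.sInf_le ⟨two_pos, hG⟩) (le_csInf ⟨2, two_pos, hG⟩ ?_)
  rintro k ⟨hk, hGk⟩
  by_contra! hk2
  obtain rfl : k = 1 := by omega
  exact hnadj (adj_of_permRepresentable_one hGk hab)

end PermRepresentable

/- On the vertices 0, …, n - 1, the first permutation is 0 2 1 4 3 6 5 …, the second lists the
blocks (2k, 2k + 1) in decreasing order of k: vertices at distance at least 2 appear in opposite
orders, while each edge keeps its orientation. -/
theorem pathGraph_permRepresentable_two (n : ℕ) :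
    PermRepresentable (SimpleGraph.pathGraph n) 2 := by
  refine permRepresentable_two_of_ranks (f := fun i : Fin n => 2 * i.val + 4 * (i.val % 2))
    (g := fun i : Fin n => 2 * (n - i.val) + 4 * (i.val % 2)) ?_ ?_ ?_
  · exact fun a b h => by simp only at h; omega
  · exact fun a b h => by simp only at h; omega
  · intro a b hab
    rw [SimpleGraph.pathGraph_adj]
    omega

/-- For `n ≥ 3`, the path graph `P_n` has permutation-representation number exactly 2. -/
theorem prn_pathGraph (n : ℕ) (hn : 3 ≤ n) : prn (SimpleGraph.pathGraph n) = 2 :=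
  prn_eq_two (pathGraph_permRepresentable_two n) (a := ⟨0, by omega⟩) (b := ⟨2, by omega⟩)
    (by simp) (by simp [SimpleGraph.pathGraph_adj])
end

section
/- For odd n ≥ 3, the word p₂p₃ with p₂ = a₂a₁a₄a₃a₆a₅⋯a_{n−1}a_{n−2}a_n and p₃ = a_{n−1}a_n a_{n−3}a_{n−2}⋯a₄a₅a₂a₃a₁ represents the path P_n permutationally. -/
open Fin.NatCast

/-
In a concatenation `p ++ q` of two permutations, the subword on two letters `a ≠ b` is
`abab`, `abba`, `baab` or `baba`, so `a` and `b` alternate iff they occur in the same order in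
`p` and in `q`. Reading `p₂` and `p₃` as maps from positions to vertices with explicit inverses,
the theorem becomes an arithmetic comparison of the positions of two vertices in `p₂` and `p₃`.
-/

section Alternation

variable {V : Type*} [DecidableEq V]

theorem List.filter_eq_pair_of_idxOf_lt {p : List V} (hp : p.Nodup) {a b : V} (hb : b ∈ p)
    (hab : p.idxOf a < p.idxOf b) :
    p.filter (fun x => decide (x = a ∨ x = b)) = [a, b] := by
  induction p with
  | nil => simp at hb
  | cons x t ih =>
    obtain ⟨hxt, ht⟩ := List.nodup_cons.mp hp
    by_cases hxa : x = a
    · subst hxa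
      have hbx : b ≠ x := by rintro rfl; exact hab.ne rfl
      have hbt : b ∈ t := (List.mem_cons.mp hb).resolve_left hbx
      have hfilter : t.filter (fun y => decide (y = x ∨ y = b)) = t.filter (· = b) :=
        List.filter_congr fun y hy => by simp [show y ≠ x from fun h => hxt (h ▸ hy)]
      rw [List.filter_cons_of_pos (by simp), hfilter, List.filter_eq,
        List.count_eq_one_of_mem ht hbt, List.replicate_one]
    · have hxb : x ≠ b := by rintro rfl; simp [List.idxOf_cons_self] at hab
      rw [List.filter_cons_of_neg (by simp [hxa, hxb])]
      rw [List.idxOf_cons_ne _ hxa, List.idxOf_cons_ne _ hxb] at hab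
      exact ih ht ((List.mem_cons.mp hb).resolve_left (Ne.symm hxb)) (Nat.succ_lt_succ_iff.mp hab)

theorem List.filter_eq_pair {p : List V} (hp : p.Nodup) {a b : V} (ha : a ∈ p) (hb : b ∈ p)
    (hab : a ≠ b) :
    p.filter (fun x => decide (x = a ∨ x = b)) =
      if p.idxOf a < p.idxOf b then [a, b] else [b, a] := by
  split_ifs with h
  · exact p.filter_eq_pair_of_idxOf_lt hp hb h
  · have hlt : p.idxOf b < p.idxOf a :=
      lt_of_le_of_ne (not_lt.mp h) (fun e => hab ((List.idxOf_inj hb).mp e).symm)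
    rw [← p.filter_eq_pair_of_idxOf_lt hp ha hlt]
    exact List.filter_congr fun x _ => by simp [or_comm]

theorem alternates_append_iff_s9 {p q : List V} (hp : p.Nodup) (hq : q.Nodup) {a b : V}
    (hap : a ∈ p) (hbp : b ∈ p) (haq : a ∈ q) (hbq : b ∈ q) (hab : a ≠ b) :
    Alternates (p ++ q) a b ↔ (Precedes p a b ↔ Precedes q a b) := by
  change List.IsChain (· ≠ ·) ((p ++ q).filter _) ↔ _
  rw [List.filter_append, p.filter_eq_pair hp hap hbp hab,
    q.filter_eq_pair hq haq hbq hab, Precedes, Precedes]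
  split_ifs <;> simp [hab.symm, *]

theorem represents_append_iff {p q : List V} (hp : IsPermList p) (hq : IsPermList q)
    (G : SimpleGraph V) :
    Represents (p ++ q) G ↔ ∀ a b, a ≠ b → (G.Adj a b ↔ (Precedes p a b ↔ Precedes q a b)) := by
  refine forall₂_congr fun a b => imp_congr_right fun hab => ?_
  rw [alternates_append_iff_s9 hp.1 hq.1 (hp.2 a) (hp.2 b) (hq.2 a) (hq.2 b) hab]

end Alternation

section PositionMap

variable {V : Type*} {A : ℕ → V} {pos : V → ℕ} {N : ℕ}

theorem isPermList_map_range (hA : ∀ i < N, ∀ v, A i = v ↔ i = pos v)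
    (hpos : ∀ v, pos v < N) : IsPermList ((List.range N).map A) := by
  refine ⟨List.nodup_range.map_on fun i hi j hj hij => ?_, fun v => ?_⟩
  · rw [List.mem_range] at hi hj
    exact ((hA i hi (A j)).1 hij).trans ((hA j hj (A j)).1 rfl).symm
  · exact List.mem_map.2 ⟨pos v, List.mem_range.2 (hpos v), (hA _ (hpos v) v).2 rfl⟩

theorem idxOf_map_range [DecidableEq V] (hA : ∀ i < N, ∀ v, A i = v ↔ i = pos v)
    (hpos : ∀ v, pos v < N) (v : V) : ((List.range N).map A).idxOf v = pos v := by
  have hv : ((List.range N).map A)[pos v]'(by simpa using hpos v) = v := by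
    simpa using (hA _ (hpos v) v).2 rfl
  conv_lhs => rw [← hv]
  exact (isPermList_map_range hA hpos).1.idxOf_getElem _ _

theorem precedes_map_range_iff [DecidableEq V] (hA : ∀ i < N, ∀ v, A i = v ↔ i = pos v)
    (hpos : ∀ v, pos v < N) (a b : V) :
    Precedes ((List.range N).map A) a b ↔ pos a < pos b := by
  rw [Precedes, idxOf_map_range hA hpos, idxOf_map_range hA hpos]

end PositionMap

theorem List.flatMap_range_pair {α : Type*} (A : ℕ → α) (m : ℕ) :
    (List.range m).flatMap (fun k => [A (2 * k), A (2 * k + 1)]) =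
      (List.range (2 * m)).map A := by
  induction m with
  | zero => simp
  | succ m ih =>
    rw [List.range_succ, List.flatMap_append, ih, show 2 * (m + 1) = 2 * m + 1 + 1 by ring,
      List.range_succ, List.range_succ]
    simp

theorem List.flatMap_range_pair_append {α : Type*} {f g : ℕ → α} {c : α} {m : ℕ} (A : ℕ → α)
    (hf : ∀ k < m, f k = A (2 * k)) (hg : ∀ k < m, g k = A (2 * k + 1)) (hc : c = A (2 * m)) :
    (List.range m).flatMap (fun k => [f k, g k]) ++ [c] = (List.range (2 * m + 1)).map A := by
  rw [List.range_succ, List.map_append, ← List.flatMap_range_pair, hc]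
  congr 1
  refine List.flatMap_congr fun k hk => ?_
  rw [hf k (List.mem_range.1 hk), hg k (List.mem_range.1 hk)]

namespace OddPathWord

/- Positions in `p₂`, `p₃` and vertices are counted from `0`: the vertex `a_j` is `j - 1`.
Since `p₂` swaps `2k` and `2k + 1`, `p₂Vertex n` is an involution and is also the position of a
vertex in `p₂`. -/
def p₂Vertex (n i : ℕ) : ℕ := if i = n - 1 then n - 1 else if i % 2 = 0 then i + 1 else i - 1

def p₃Vertex (n i : ℕ) : ℕ := if i = n - 1 then 0 else if i % 2 = 0 then n - 2 - i else n - i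

def p₃Index (n v : ℕ) : ℕ := if v = 0 then n - 1 else if v % 2 = 0 then n - v else n - 2 - v

variable {n : ℕ}

theorem p₂Vertex_lt {i : ℕ} (hi : i < n) : p₂Vertex n i < n := by
  unfold p₂Vertex; split_ifs <;> omega

theorem p₃Index_lt {v : ℕ} (hv : v < n) : p₃Index n v < n := by
  unfold p₃Index; split_ifs <;> omega

theorem natCast_p₂Vertex_eq_iff [NeZero n] (hn : n % 2 = 1) (i : ℕ) (hi : i < n) (v : Fin n) :
    ((p₂Vertex n i : ℕ) : Fin n) = v ↔ i = p₂Vertex n v := by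
  have := v.isLt
  rw [Fin.ext_iff, Fin.val_cast_of_lt (p₂Vertex_lt hi)]
  unfold p₂Vertex; split_ifs <;> omega

theorem natCast_p₃Vertex_eq_iff [NeZero n] (hn : n % 2 = 1) (i : ℕ) (hi : i < n) (v : Fin n) :
    ((p₃Vertex n i : ℕ) : Fin n) = v ↔ i = p₃Index n v := by
  have := v.isLt
  rw [Fin.ext_iff, Fin.val_cast_of_lt (by unfold p₃Vertex; split_ifs <;> omega)]
  unfold p₃Vertex p₃Index; split_ifs <;> omega

theorem adjacent_iff_same_order (hn : n % 2 = 1) {a b : ℕ} (ha : a < n) (hb : b < n)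
    (hab : a ≠ b) :
    (a + 1 = b ∨ b + 1 = a) ↔ (p₂Vertex n a < p₂Vertex n b ↔ p₃Index n a < p₃Index n b) := by
  unfold p₂Vertex p₃Index; split_ifs <;> omega

theorem p₂_eq_map_range [NeZero n] (hn : n % 2 = 1) :
    ((List.range ((n - 1) / 2)).flatMap fun k =>
        [((2 * k + 1 : ℕ) : Fin n), ((2 * k : ℕ) : Fin n)]) ++ [((n - 1 : ℕ) : Fin n)] =
      (List.range n).map fun i => ((p₂Vertex n i : ℕ) : Fin n) := by
  obtain ⟨m, rfl⟩ : ∃ m, n = 2 * m + 1 := ⟨n / 2, by omega⟩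
  rw [show (2 * m + 1 - 1) / 2 = m by omega]
  refine List.flatMap_range_pair_append _ (fun k hk => ?_) (fun k hk => ?_) ?_ <;>
    simp only [p₂Vertex] <;> congr 1 <;> split_ifs <;> omega

theorem p₃_eq_map_range [NeZero n] (hn : n % 2 = 1) :
    ((List.range ((n - 1) / 2)).flatMap fun k =>
        [((n - 2 - 2 * k : ℕ) : Fin n), ((n - 1 - 2 * k : ℕ) : Fin n)]) ++ [(0 : Fin n)] =
      (List.range n).map fun i => ((p₃Vertex n i : ℕ) : Fin n) := by
  obtain ⟨m, rfl⟩ : ∃ m, n = 2 * m + 1 := ⟨n / 2, by omega⟩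
  rw [show (2 * m + 1 - 1) / 2 = m by omega]
  refine List.flatMap_range_pair_append _ (fun k hk => ?_) (fun k hk => ?_)
    (by simp [p₃Vertex]) <;> simp only [p₃Vertex] <;> congr 1 <;> split_ifs <;> omega

end OddPathWord

theorem path_word_odd_general (n : ℕ) [NeZero n] (hodd : Odd n) :
    Represents
      ((((List.range ((n - 1) / 2)).flatMap fun k =>
          [((2 * k + 1 : ℕ) : Fin n), ((2 * k : ℕ) : Fin n)]) ++ [((n - 1 : ℕ) : Fin n)]) ++
       (((List.range ((n - 1) / 2)).flatMap fun k =>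
          [((n - 2 - 2 * k : ℕ) : Fin n), ((n - 1 - 2 * k : ℕ) : Fin n)]) ++ [(0 : Fin n)]))
      (SimpleGraph.pathGraph n) := by
  open OddPathWord in
  have hn : n % 2 = 1 := Nat.odd_iff.mp hodd
  have h₂ := natCast_p₂Vertex_eq_iff hn
  have h₃ := natCast_p₃Vertex_eq_iff hn
  have hpos₂ (v : Fin n) : p₂Vertex n v < n := p₂Vertex_lt v.isLt
  have hpos₃ (v : Fin n) : p₃Index n v < n := p₃Index_lt v.isLt
  rw [p₂_eq_map_range hn, p₃_eq_map_range hn,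
    represents_append_iff (isPermList_map_range h₂ hpos₂) (isPermList_map_range h₃ hpos₃)]
  intro a b hab
  rw [precedes_map_range_iff h₂ hpos₂, precedes_map_range_iff h₃ hpos₃,
    SimpleGraph.pathGraph_adj]
  exact adjacent_iff_same_order hn a.isLt b.isLt (Fin.val_ne_of_ne hab)

/-- For odd `n ≥ 3`, the word `p₂p₃` with `p₂ = a₂a₁a₄a₃⋯a_{n−1}a_{n−2}a_n` and
`p₃ = a_{n−1}a_n a_{n−3}a_{n−2}⋯a₄a₅a₂a₃a₁` represents the path `P_n` permutationally.
Here `a_i` is the vertex `i - 1 : Fin n`. -/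
theorem path_word_odd (n : ℕ) [NeZero n] (hn : 3 ≤ n) (hodd : Odd n) :
    Represents
      ((((List.range ((n - 1) / 2)).flatMap fun k =>
          [((2 * k + 1 : ℕ) : Fin n), ((2 * k : ℕ) : Fin n)]) ++ [((n - 1 : ℕ) : Fin n)]) ++
       (((List.range ((n - 1) / 2)).flatMap fun k =>
          [((n - 2 - 2 * k : ℕ) : Fin n), ((n - 1 - 2 * k : ℕ) : Fin n)]) ++ [(0 : Fin n)]))
      (SimpleGraph.pathGraph n) :=
  path_word_odd_general n hodd
end

section
/- For even n ≥ 6, the word p₁p₂p₃ represents the cycle C_n permutationally, where p₂ = a_n a₂a₁a₄a₃⋯a_{n−2}a_{n−3}a_{n−1}, p₃ = a_n a_{n−2}a_{n−1}a_{n−4}a_{n−3}⋯a₄a₅a₂a₃a₁, and p₁ = p_A p_B a_n a₁ a_{n−1} with p_A any permutation of the even-indexed vertices other than a_n and p_B any permutation of the odd-indexed vertices other than a₁ and a_{n−1}. -/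
open Fin.NatCast

/-!
Two distinct letters alternate in a concatenation of permutations exactly when consecutive
permutations put them in the same order. In `p₂` and `p₃` the position of every vertex is an
explicit function of its index, while `p₁` lists the blocks `p_A, p_B, a_n, a₁, a_{n−1}` in this
order. Two distinct vertices of the same block are never adjacent in `C_n`, and `p₂` and `p₃`
order them differently. Two vertices of different blocks are ordered by `p₁` according to their
blocks, and a case check on indices shows that they are adjacent exactly when `p₂` and `p₃` both
order them in the same way.
-/

namespace List

variable {α : Type*} [DecidableEq α] {l : List α} {a b : α}

theorem filter_eq_pair_of_idxOf_lt_s11 (hl : l.Nodup) (ha : a ∈ l) (hb : b ∈ l)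
    (hab : l.idxOf a < l.idxOf b) :
    l.filter (fun x => decide (x = a ∨ x = b)) = [a, b] := by
  induction l with
  | nil => simp at ha
  | cons x t ih =>
    obtain ⟨hxt, ht⟩ := nodup_cons.mp hl
    by_cases hxa : x = a
    · subst hxa
      have hbt : b ∈ t := by
        rcases mem_cons.mp hb with rfl | h
        · simp at hab
        · exact h
      have hfilter : t.filter (fun y => decide (y = x ∨ y = b)) = [b] := by
        rw [filter_congr (q := (· == b)) fun y hy => by grind, filter_beq,
          count_eq_one_of_mem ht hbt, replicate_one]
      rw [filter_cons_of_pos (by simp), hfilter]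
    · have hxb : x ≠ b := by
        rintro rfl
        simp [idxOf_cons_ne _ hxa] at hab
      rw [filter_cons_of_neg (by simp [hxa, hxb])]
      rw [idxOf_cons_ne _ hxa, idxOf_cons_ne _ hxb] at hab
      exact ih ht (by simpa [Ne.symm hxa] using ha) (by simpa [Ne.symm hxb] using hb)
        (by omega)

theorem filter_eq_pair_s11 (hl : l.Nodup) (ha : a ∈ l) (hb : b ∈ l) (hab : a ≠ b) :
    l.filter (fun x => decide (x = a ∨ x = b)) =
      if l.idxOf a < l.idxOf b then [a, b] else [b, a] := by
  split_ifs with h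
  · exact filter_eq_pair_of_idxOf_lt_s11 hl ha hb h
  · have hba : l.idxOf b < l.idxOf a :=
      lt_of_le_of_ne (not_lt.mp h) fun e => hab ((idxOf_inj hb).mp e).symm
    simp_rw [or_comm (a := _ = a)]
    exact filter_eq_pair_of_idxOf_lt_s11 hl hb ha hba

end List

section Alternation

variable {α : Type*} [DecidableEq α] {a b : α}

theorem alternates_append_three_iff {w₁ w₂ w₃ : List α}
    (h₁ : IsPermList w₁) (h₂ : IsPermList w₂) (h₃ : IsPermList w₃) (hab : a ≠ b) :
    Alternates (w₁ ++ w₂ ++ w₃) a b ↔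
      (Precedes w₁ a b ↔ Precedes w₂ a b) ∧ (Precedes w₂ a b ↔ Precedes w₃ a b) := by
  unfold Alternates Precedes
  show List.IsChain _ _ ↔ _
  rw [List.filter_append, List.filter_append, List.filter_eq_pair_s11 h₁.1 (h₁.2 a) (h₁.2 b) hab,
    List.filter_eq_pair_s11 h₂.1 (h₂.2 a) (h₂.2 b) hab, List.filter_eq_pair_s11 h₃.1 (h₃.2 a) (h₃.2 b) hab]
  split_ifs <;> simp [Ne.symm hab, *]

theorem precedes_of_pairwise {β : Type*} [Preorder β] {l : List α} {r : α → β}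
    (hl : l.Pairwise fun u v => r u ≤ r v) (ha : a ∈ l) (hb : b ∈ l) (h : r a < r b) :
    Precedes l a b := by
  by_contra hba
  rcases (not_lt.mp hba).lt_or_eq with hlt | heq
  · have hle := List.pairwise_iff_getElem.mp hl _ _ (List.idxOf_lt_length_iff.mpr hb)
      (List.idxOf_lt_length_iff.mpr ha) hlt
    rw [List.getElem_idxOf, List.getElem_idxOf] at hle
    exact hle.not_gt h
  · rw [List.idxOf_inj hb] at heq
    exact h.ne (congrArg r heq.symm)

end Alternation

section PositionFunction

variable {n : ℕ} [NeZero n] {g pos : ℕ → ℕ}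

theorem isPermList_map_range_s11 (hpos : ∀ v < n, pos v < n) (hg : ∀ v < n, g (pos v) = v) :
    IsPermList ((List.range n).map fun j => (g j : Fin n)) := by
  have hmem : ∀ v : Fin n, v ∈ (List.range n).map fun j => (g j : Fin n) := fun v =>
    List.mem_map.mpr
      ⟨pos v, List.mem_range.mpr (hpos v v.isLt), by rw [hg v v.isLt, Fin.cast_val_eq_self]⟩
  refine ⟨?_, hmem⟩
  rw [← Multiset.coe_nodup, ← Multiset.toFinset_card_eq_card_iff_nodup]
  have huniv : (↑((List.range n).map fun j => (g j : Fin n)) : Multiset (Fin n)).toFinset =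
      Finset.univ :=
    Finset.eq_univ_of_forall fun v => by simpa using hmem v
  simp [huniv]

theorem idxOf_map_range_s11 (hpos : ∀ v < n, pos v < n) (hg : ∀ v < n, g (pos v) = v) (v : Fin n) :
    ((List.range n).map fun j => (g j : Fin n)).idxOf v = pos v := by
  set l := (List.range n).map fun j => (g j : Fin n)
  have hlt : pos v < l.length := by simpa [l] using hpos v v.isLt
  have hget : l[pos v] = v := by simp [l, hg v v.isLt]
  calc l.idxOf v = l.idxOf l[pos v] := by rw [hget]
    _ = pos v := (isPermList_map_range_s11 hpos hg).1.idxOf_getElem _ hlt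

end PositionFunction

theorem List.flatMap_range_pair_s11 {β : Type*} (f g : ℕ → β) (m : ℕ) :
    (List.range m).flatMap (fun k => [f k, g k]) =
      (List.range (2 * m)).map fun j => if j % 2 = 0 then f (j / 2) else g (j / 2) := by
  induction m with
  | zero => simp
  | succ m ih =>
    rw [List.range_succ, List.flatMap_append, ih, show 2 * (m + 1) = 2 * m + 1 + 1 by ring,
      List.range_succ, List.range_succ]
    simp [Nat.mul_add_div]

theorem List.cons_append_singleton_eq_map_range {β : Type*} (x y : β) (F : ℕ → β) (m : ℕ) :
    x :: ((List.range m).map F ++ [y]) =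
      (List.range (m + 2)).map fun j =>
        if j = 0 then x else if j = m + 1 then y else F (j - 1) := by
  rw [List.range_succ_eq_map, List.range_succ]
  simp +contextual [Nat.ne_of_lt]

theorem SimpleGraph.cycleGraph_adj_iff_val {n : ℕ} (hn : 2 ≤ n) {u v : Fin n} :
    (cycleGraph n).Adj u v ↔
      u.val + 1 = v.val ∨ v.val + 1 = u.val ∨ (u.val = 0 ∧ v.val + 1 = n) ∨
        (v.val = 0 ∧ u.val + 1 = n) := by
  rw [cycleGraph_adj']
  rcases lt_trichotomy u v with h | rfl | h
  · rw [Fin.coe_sub_iff_lt.mpr h, Fin.coe_sub_iff_le.mpr h.le]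
    omega
  · rw [Fin.coe_sub_iff_le.mpr le_rfl]
    omega
  · rw [Fin.coe_sub_iff_le.mpr h.le, Fin.coe_sub_iff_lt.mpr h]
    omega

-- Vertices are indexed from `0`: the vertex `a_{v+1}` of the paper is `v`. Position `j` of `p₂`
-- (counted from `0`) holds `perm₂ n j`, and `v` sits at position `pos₂ n v`; likewise for `p₃`.
def perm₂ (n j : ℕ) : ℕ :=
  if j = 0 then n - 1 else if j = n - 1 then n - 2 else if j % 2 = 1 then j else j - 2

def pos₂ (n v : ℕ) : ℕ :=
  if v = n - 1 then 0 else if v = n - 2 then n - 1 else if v % 2 = 1 then v else v + 2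

def perm₃ (n j : ℕ) : ℕ :=
  if j = 0 then n - 1 else if j = n - 1 then 0 else if j % 2 = 1 then n - 2 - j else n - j

def pos₃ (n v : ℕ) : ℕ :=
  if v = n - 1 then 0 else if v = 0 then n - 1 else if v % 2 = 1 then n - 2 - v else n - v

-- The index of the block of `p₁ = p_A p_B a_n a₁ a_{n−1}` that contains `v`.
def block₁ (n v : ℕ) : ℕ :=
  if v = n - 1 then 2 else if v = 0 then 3 else if v = n - 2 then 4 else if v % 2 = 1 then 0 else 1

section Arithmetic

variable {n u v : ℕ}

theorem pos₂_lt (hv : v < n) : pos₂ n v < n := by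
  unfold pos₂
  grind

theorem perm₂_pos₂ (he : n % 2 = 0) : perm₂ n (pos₂ n v) = v := by
  unfold perm₂ pos₂
  grind

theorem pos₃_lt (hv : v < n) : pos₃ n v < n := by
  unfold pos₃
  grind

theorem perm₃_pos₃ (he : n % 2 = 0) (hv : v < n) : perm₃ n (pos₃ n v) = v := by
  unfold perm₃ pos₃
  grind

variable (he : n % 2 = 0) (hu : u < n) (hv : v < n)
include he hu hv

theorem adj_iff_pos_lt_of_block₁_lt (h : block₁ n u < block₁ n v) :
    (u + 1 = v ∨ v + 1 = u ∨ (u = 0 ∧ v + 1 = n) ∨ (v = 0 ∧ u + 1 = n)) ↔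
      pos₂ n u < pos₂ n v ∧ pos₃ n u < pos₃ n v := by
  unfold block₁ pos₂ pos₃ at *
  split_ifs at h ⊢ <;> omega

theorem not_adj_and_not_pos_lt_iff_of_block₁_eq (h : block₁ n u = block₁ n v) (huv : u ≠ v) :
    ¬(u + 1 = v ∨ v + 1 = u ∨ (u = 0 ∧ v + 1 = n) ∨ (v = 0 ∧ u + 1 = n)) ∧
      ¬(pos₂ n u < pos₂ n v ↔ pos₃ n u < pos₃ n v) := by
  unfold block₁ pos₂ pos₃ at *
  split_ifs at h ⊢ <;> omega

theorem adj_iff_orders (huv : u ≠ v) {i j : ℕ} (hij : block₁ n u < block₁ n v → i < j)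
    (hji : block₁ n v < block₁ n u → j < i) :
    (u + 1 = v ∨ v + 1 = u ∨ (u = 0 ∧ v + 1 = n) ∨ (v = 0 ∧ u + 1 = n)) ↔
      (i < j ↔ pos₂ n u < pos₂ n v) ∧ (pos₂ n u < pos₂ n v ↔ pos₃ n u < pos₃ n v) := by
  have h₂ : pos₂ n u ≠ pos₂ n v := fun h =>
    huv (by rw [← perm₂_pos₂ (v := u) he, h, perm₂_pos₂ he])
  have h₃ : pos₃ n u ≠ pos₃ n v := fun h =>
    huv (by rw [← perm₃_pos₃ he hu, h, perm₃_pos₃ he hv])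
  rcases lt_trichotomy (block₁ n u) (block₁ n v) with h | h | h
  · have := adj_iff_pos_lt_of_block₁_lt he hu hv h
    have := hij h
    omega
  · have := not_adj_and_not_pos_lt_iff_of_block₁_eq he hu hv h huv
    omega
  · have := adj_iff_pos_lt_of_block₁_lt he hv hu h
    have := hji h
    omega

end Arithmetic

section Words

variable {n : ℕ} [NeZero n]

theorem p₂_eq_map_range (hn : 2 ≤ n) (he : n % 2 = 0) :
    ((n - 1 : ℕ) : Fin n) ::
        (((List.range ((n - 2) / 2)).flatMap fun k =>
          [((2 * k + 1 : ℕ) : Fin n), ((2 * k : ℕ) : Fin n)]) ++ [((n - 2 : ℕ) : Fin n)]) =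
      (List.range n).map fun j => (perm₂ n j : Fin n) := by
  rw [List.flatMap_range_pair_s11, List.cons_append_singleton_eq_map_range,
    show 2 * ((n - 2) / 2) + 2 = n by omega]
  refine List.map_congr_left fun j hj => ?_
  rw [List.mem_range] at hj
  unfold perm₂
  split_ifs <;> first | omega | rfl | (congr 1; omega)

theorem p₃_eq_map_range (hn : 2 ≤ n) (he : n % 2 = 0) :
    ((n - 1 : ℕ) : Fin n) ::
        (((List.range ((n - 2) / 2)).flatMap fun k =>
          [((n - 3 - 2 * k : ℕ) : Fin n), ((n - 2 - 2 * k : ℕ) : Fin n)]) ++ [(0 : Fin n)]) =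
      (List.range n).map fun j => (perm₃ n j : Fin n) := by
  rw [List.flatMap_range_pair_s11, List.cons_append_singleton_eq_map_range,
    show 2 * ((n - 2) / 2) + 2 = n by omega]
  refine List.map_congr_left fun j hj => ?_
  rw [List.mem_range] at hj
  unfold perm₃
  split_ifs <;> first | omega | rfl | (congr 1; omega)

theorem isPermList_p₂ (he : n % 2 = 0) :
    IsPermList ((List.range n).map fun j => (perm₂ n j : Fin n)) :=
  isPermList_map_range_s11 (fun _ => pos₂_lt) (fun _ _ => perm₂_pos₂ he)

theorem idxOf_p₂ (he : n % 2 = 0) (v : Fin n) :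
    ((List.range n).map fun j => (perm₂ n j : Fin n)).idxOf v = pos₂ n v :=
  idxOf_map_range_s11 (fun _ => pos₂_lt) (fun _ _ => perm₂_pos₂ he) v

theorem isPermList_p₃ (he : n % 2 = 0) :
    IsPermList ((List.range n).map fun j => (perm₃ n j : Fin n)) :=
  isPermList_map_range_s11 (fun _ => pos₃_lt) (fun _ => perm₃_pos₃ he)

theorem idxOf_p₃ (he : n % 2 = 0) (v : Fin n) :
    ((List.range n).map fun j => (perm₃ n j : Fin n)).idxOf v = pos₃ n v :=
  idxOf_map_range_s11 (fun _ => pos₃_lt) (fun _ => perm₃_pos₃ he) v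

variable {pA pB : List (Fin n)}

theorem isPermList_p₁ (hn : 4 ≤ n) (he : n % 2 = 0)
    (hA : pA.Nodup ∧ ∀ x : Fin n, x ∈ pA ↔ (x.val % 2 = 1 ∧ x.val ≠ n - 1))
    (hB : pB.Nodup ∧ ∀ x : Fin n, x ∈ pB ↔ (x.val % 2 = 0 ∧ x.val ≠ 0 ∧ x.val ≠ n - 2)) :
    IsPermList (pA ++ pB ++ [((n - 1 : ℕ) : Fin n), (0 : Fin n), ((n - 2 : ℕ) : Fin n)]) := by
  have hx : ((n - 1 : ℕ) : Fin n).val = n - 1 := Fin.val_cast_of_lt (by omega)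
  have hz : ((n - 2 : ℕ) : Fin n).val = n - 2 := Fin.val_cast_of_lt (by omega)
  refine ⟨List.nodup_append.mpr ⟨List.nodup_append.mpr ⟨hA.1, hB.1, ?_⟩, ?_, ?_⟩, fun v => ?_⟩
  · rintro a ha b hb rfl
    have := (hA.2 a).1 ha
    have := (hB.2 a).1 hb
    omega
  · simp [Fin.ext_iff, hx, hz]
    omega
  · rintro a ha b hb rfl
    simp only [List.mem_cons, List.not_mem_nil, or_false, Fin.ext_iff, Fin.val_zero, hx, hz] at hb
    rcases List.mem_append.mp ha with h | h
    · have := (hA.2 a).1 h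
      omega
    · have := (hB.2 a).1 h
      omega
  · simp only [List.mem_append, hA.2, hB.2, List.mem_cons, List.not_mem_nil, or_false,
      Fin.ext_iff, Fin.val_zero, hx, hz]
    omega

theorem pairwise_block₁ (hn : 4 ≤ n) (he : n % 2 = 0)
    (hA : ∀ x : Fin n, x ∈ pA ↔ (x.val % 2 = 1 ∧ x.val ≠ n - 1))
    (hB : ∀ x : Fin n, x ∈ pB ↔ (x.val % 2 = 0 ∧ x.val ≠ 0 ∧ x.val ≠ n - 2)) :
    (pA ++ pB ++ [((n - 1 : ℕ) : Fin n), (0 : Fin n), ((n - 2 : ℕ) : Fin n)]).Pairwise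
      fun u v : Fin n => block₁ n u ≤ block₁ n v := by
  have hx : block₁ n (n - 1) = 2 := by unfold block₁; split_ifs <;> omega
  have hy : block₁ n 0 = 3 := by unfold block₁; split_ifs <;> omega
  have hz : block₁ n (n - 2) = 4 := by unfold block₁; split_ifs <;> omega
  have hA0 : ∀ v ∈ pA, block₁ n v = 0 := fun v hv => by
    have := (hA v).1 hv
    unfold block₁
    split_ifs <;> omega
  have hB1 : ∀ v ∈ pB, block₁ n v = 1 := fun v hv => by
    have := (hB v).1 hv
    unfold block₁
    split_ifs <;> omega
  rw [List.pairwise_append, List.pairwise_append]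
  refine ⟨⟨List.pairwise_of_forall_mem_list fun a ha b hb => by rw [hA0 a ha, hA0 b hb],
    List.pairwise_of_forall_mem_list fun a ha b hb => by rw [hB1 a ha, hB1 b hb],
    fun a ha b hb => by rw [hA0 a ha, hB1 b hb]; omega⟩, by simp [hx, hy, hz], fun a ha b hb => ?_⟩
  simp only [List.mem_cons, List.not_mem_nil, or_false] at hb
  have hab : block₁ n a ≤ 1 := by
    rcases List.mem_append.mp ha with h | h
    · simp [hA0 a h]
    · simp [hB1 a h]
  rcases hb with rfl | rfl | rfl <;> simp [hx, hy, hz] <;> omega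

end Words

/-- For even `n ≥ 6`, the word `p₁p₂p₃` represents the cycle `C_n` permutationally, where
`p₂ = a_n a₂a₁a₄a₃⋯a_{n−2}a_{n−3}a_{n−1}`,
`p₃ = a_n a_{n−2}a_{n−1}a_{n−4}a_{n−3}⋯a₄a₅a₂a₃a₁`, and
`p₁ = p_A p_B a_n a₁ a_{n−1}` with `p_A` any permutation of the even-indexed vertices
other than `a_n`, and `p_B` any permutation of the odd-indexed vertices other than
`a₁` and `a_{n−1}`. Here `a_i` is the vertex `i - 1 : Fin n`. -/
theorem cycle_word_even (n : ℕ) [NeZero n] (hn : 6 ≤ n) (heven : Even n)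
    (pA pB : List (Fin n))
    (hA : pA.Nodup ∧ ∀ x : Fin n, x ∈ pA ↔ (x.val % 2 = 1 ∧ x.val ≠ n - 1))
    (hB : pB.Nodup ∧ ∀ x : Fin n, x ∈ pB ↔ (x.val % 2 = 0 ∧ x.val ≠ 0 ∧ x.val ≠ n - 2)) :
    Represents
      ((pA ++ pB ++ [((n - 1 : ℕ) : Fin n), (0 : Fin n), ((n - 2 : ℕ) : Fin n)]) ++
       (((n - 1 : ℕ) : Fin n) ::
        (((List.range ((n - 2) / 2)).flatMap fun k =>
          [((2 * k + 1 : ℕ) : Fin n), ((2 * k : ℕ) : Fin n)]) ++ [((n - 2 : ℕ) : Fin n)])) ++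
       (((n - 1 : ℕ) : Fin n) ::
        (((List.range ((n - 2) / 2)).flatMap fun k =>
          [((n - 3 - 2 * k : ℕ) : Fin n), ((n - 2 - 2 * k : ℕ) : Fin n)]) ++ [(0 : Fin n)])))
      (SimpleGraph.cycleGraph n) := by
  have he : n % 2 = 0 := Nat.even_iff.mp heven
  have hn₄ : 4 ≤ n := by omega
  have hn₂ : 2 ≤ n := by omega
  intro a b hab
  have hp₁ := isPermList_p₁ hn₄ he hA hB
  have hsorted := pairwise_block₁ hn₄ he hA.2 hB.2
  rw [p₂_eq_map_range hn₂ he, p₃_eq_map_range hn₂ he,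
    alternates_append_three_iff hp₁ (isPermList_p₂ he) (isPermList_p₃ he) hab,
    SimpleGraph.cycleGraph_adj_iff_val hn₂]
  unfold Precedes
  rw [idxOf_p₂ he, idxOf_p₂ he, idxOf_p₃ he, idxOf_p₃ he]
  exact adj_iff_orders he a.isLt b.isLt (Fin.val_ne_of_ne hab)
    (precedes_of_pairwise hsorted (hp₁.2 a) (hp₁.2 b))
    (precedes_of_pairwise hsorted (hp₁.2 b) (hp₁.2 a))
end

section
/- The word obtained by concatenating p₁ = 1 2 ⋯ m 0, p₂ = m (m−1) ⋯ 2 1 0, and p₃ = 1 2 ⋯ m 0 represents the star graph K_{1,m} (center 0, leaves 1,…,m) permutationally. -/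
/-- The star graph `K_{1,m}` with center `0` and leaves `1, …, m`, on `Fin (m+1)`. -/
def starGraph (m : ℕ) : SimpleGraph (Fin (m + 1)) :=
  SimpleGraph.fromRel fun a _ => a = 0


/-!
Write the word as `L c Lʳ c L c`, where `L` lists every leaf exactly once. Restricted to the
centre `c` and a leaf `b` it reads `b c b c b c`. Restricted to two leaves it begins with `s sʳ`,
where `s` is the (nonempty) restriction of `L`, so the last letter of `s` occurs twice in a row.
-/

lemma List.not_isChain_ne_append_reverse {α : Type*} {s : List α} (hs : s ≠ []) (t : List α) :
    ¬ (s ++ s.reverse ++ t).IsChain (· ≠ ·) := by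
  obtain ⟨s', y, rfl⟩ := (List.eq_nil_or_concat s).resolve_left hs
  intro h
  have hyy : [y, y] <:+: s'.concat y ++ (s'.concat y).reverse ++ t :=
    ⟨s', s'.reverse ++ t, by simp⟩
  simpa using h.infix hyy

lemma List.filter_eq_singleton_of_nodup {α : Type*} {l : List α} (hl : l.Nodup) {p : α → Bool}
    {b : α} (hb : b ∈ l) (hp : ∀ x ∈ l, p x ↔ x = b) : l.filter p = [b] :=
  List.perm_singleton.1 <| (List.perm_ext_iff_of_nodup (hl.filter p) (List.nodup_singleton b)).2
    fun x => by simp only [List.mem_filter, List.mem_singleton]; grind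

lemma alternates_comm {V : Type*} [DecidableEq V] (w : List V) (a b : V) :
    Alternates w a b ↔ Alternates w b a := by
  simp only [Alternates, or_comm]

section StarWord

variable {V : Type*} [DecidableEq V] {L : List V} {c : V}

lemma alternates_center_starWord (hL : L.Nodup) (hc : c ∉ L) {b : V} (hb : b ∈ L) :
    Alternates (L ++ [c] ++ (L.reverse ++ [c]) ++ (L ++ [c])) c b := by
  have hbc : b ≠ c := fun h => hc (h ▸ hb)
  have hs : L.filter (fun x => decide (x = c ∨ x = b)) = [b] :=
    List.filter_eq_singleton_of_nodup hL hb fun x hx => by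
      simpa using fun h : x = c => absurd (h ▸ hx) hc
  simp only [Alternates, List.filter_append, List.filter_reverse, hs]
  show List.IsChain _ _
  simp [hbc, hbc.symm]

lemma not_alternates_leaves_starWord {a b : V} (ha : a ∈ L) (hac : a ≠ c) (hbc : b ≠ c) :
    ¬ Alternates (L ++ [c] ++ (L.reverse ++ [c]) ++ (L ++ [c])) a b := by
  have hs : L.filter (fun x => decide (x = a ∨ x = b)) ≠ [] :=
    List.ne_nil_of_mem (List.mem_filter.2 ⟨ha, by simp⟩)
  have hc : [c].filter (fun x => decide (x = a ∨ x = b)) = [] := by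
    simp [hac.symm, hbc.symm]
  simp only [Alternates, List.filter_append, List.filter_reverse, hc, List.append_nil]
  exact List.not_isChain_ne_append_reverse hs _

theorem represents_fromRel_eq_of_isPermList (hL : IsPermList (L ++ [c])) :
    Represents (L ++ [c] ++ (L.reverse ++ [c]) ++ (L ++ [c]))
      (SimpleGraph.fromRel fun a _ => a = c) := by
  obtain ⟨hnodup, hmem⟩ := hL
  have hLnodup : L.Nodup := hnodup.sublist (List.sublist_append_left L [c])
  have hcL : c ∉ L := fun h =>
    (List.nodup_append.1 hnodup).2.2 c h c (List.mem_singleton_self c) rfl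
  have hleaf : ∀ x, x ≠ c → x ∈ L := fun x hx => by simpa [hx] using hmem x
  intro a b hab
  rw [SimpleGraph.fromRel_adj]
  constructor
  · rintro ⟨-, rfl | rfl⟩
    · exact alternates_center_starWord hLnodup hcL (hleaf b hab.symm)
    · exact (alternates_comm _ _ _).2 (alternates_center_starWord hLnodup hcL (hleaf a hab))
  · intro h
    refine ⟨hab, by_contra fun hne => ?_⟩
    push Not at hne
    exact not_alternates_leaves_starWord (hleaf a hne.1) hne.1 hne.2 h

end StarWord

section FinRange

open Fin.NatCast

lemma List.map_range_natCast_add_one (m : ℕ) :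
    (List.range m).map (fun k => ((k + 1 : ℕ) : Fin (m + 1))) =
      (List.finRange m).map Fin.succ := by
  apply List.ext_getElem (by simp)
  intro i h₁ h₂
  simp only [List.length_map, List.length_range] at h₁
  simp only [List.getElem_map, List.getElem_range, List.getElem_finRange, Fin.ext_iff,
    Fin.val_natCast, Fin.val_succ, Fin.val_cast]
  exact Nat.mod_eq_of_lt (by omega)

lemma List.map_range_natCast_sub (m : ℕ) :
    (List.range m).map (fun k => ((m - k : ℕ) : Fin (m + 1))) =
      ((List.finRange m).map Fin.succ).reverse := by
  apply List.ext_getElem (by simp)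
  intro i h₁ h₂
  simp only [List.length_map, List.length_range] at h₁
  simp only [List.getElem_map, List.getElem_range, List.getElem_reverse, List.getElem_finRange,
    List.length_map, List.length_finRange, Fin.ext_iff, Fin.val_natCast, Fin.val_succ,
    Fin.val_cast]
  rw [Nat.mod_eq_of_lt (by omega)]
  omega

end FinRange

lemma isPermList_map_succ_finRange_append_zero (m : ℕ) :
    IsPermList ((List.finRange m).map Fin.succ ++ [0]) := by
  have hperm : ((List.finRange m).map Fin.succ ++ [0]).Perm (List.finRange (m + 1)) := by
    rw [List.finRange_succ]
    exact List.perm_append_comm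
  exact ⟨hperm.nodup_iff.2 (List.nodup_finRange _),
    fun x => hperm.mem_iff.2 (List.mem_finRange x)⟩

open Fin.NatCast in
/-- The concatenation of `p₁ = 1 2 ⋯ m 0`, `p₂ = m (m−1) ⋯ 1 0` and `p₃ = 1 2 ⋯ m 0`
represents the star graph `K_{1,m}` permutationally. -/
theorem star_word_represents (m : ℕ) :
    Represents
      ((((List.range m).map fun k => ((k + 1 : ℕ) : Fin (m + 1))) ++ [0]) ++
       (((List.range m).map fun k => ((m - k : ℕ) : Fin (m + 1))) ++ [0]) ++
       (((List.range m).map fun k => ((k + 1 : ℕ) : Fin (m + 1))) ++ [0]))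
      (starGraph m) := by
  rw [List.map_range_natCast_add_one, List.map_range_natCast_sub]
  exact represents_fromRel_eq_of_isPermList (isPermList_map_succ_finRange_append_zero m)
end
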